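/- arXiv:cs/0701124 — 3 statements merged into one kernel-verified Lean document; each statement's English description precedes it below -/
import Mathlib

section
/- In a pair-wise independent network, for any k-partition (B_1,...,B_k) of {1,...,m}, the quantity Σ_{l=1}^k H(X_{B_l}) − H(X_1,...,X_m) equals the sum of mutual informations I(Y_{i,j}; Y_{j,i}) over all pairs (i,j) with i and j lying in different atoms of the partition. -/
open Finset

/-- Probability that random variable `X` equals `a`, under weight function `p`. -/
noncomputable def pr {Ω α : Type*} [Fintype Ω] [DecidableEq α]
    (p : Ω → ℝ) (X : Ω → α) (a : α) : ℝ :=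
  ∑ ω ∈ Finset.univ.filter (fun ω => X ω = a), p ω

/-- Shannon entropy (in bits) of the random variable `X`. -/
noncomputable def ent {Ω α : Type*} [Fintype Ω] [Fintype α] [DecidableEq α]
    (p : Ω → ℝ) (X : Ω → α) : ℝ :=
  - ∑ a, pr p X a * Real.logb 2 (pr p X a)

/-- Mutual information `I(X;Y) = H(X) + H(Y) - H(X,Y)`. -/
noncomputable def mi {Ω α β : Type*} [Fintype Ω] [Fintype α] [Fintype β]
    [DecidableEq α] [DecidableEq β] (p : Ω → ℝ) (X : Ω → α) (Y : Ω → β) : ℝ :=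
  ent p X + ent p Y - ent p (fun ω => (X ω, Y ω))

/-- `p` is a probability mass function on the finite sample space `Ω`. -/
def IsProb {Ω : Type*} [Fintype Ω] (p : Ω → ℝ) : Prop :=
  (∀ ω, 0 ≤ p ω) ∧ ∑ ω, p ω = 1

/-- Mutual independence of a finite family of random variables. -/
def MutIndep {Ω ι : Type*} [Fintype Ω] [Fintype ι] [DecidableEq ι] {α : ι → Type*}
    [∀ i, DecidableEq (α i)] (p : Ω → ℝ) (X : ∀ i, Ω → α i) : Prop :=
  ∀ a : ∀ i, α i, pr p (fun ω i => X i ω) a = ∏ i, pr p (X i) (a i)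

/-- Independence of a pair of random variables. -/
def IndepPair {Ω α β : Type*} [Fintype Ω] [DecidableEq α] [DecidableEq β]
    (p : Ω → ℝ) (X : Ω → α) (Y : Ω → β) : Prop :=
  ∀ a b, pr p (fun ω => (X ω, Y ω)) (a, b) = pr p X a * pr p Y b

section aux

variable {Ω : Type*} [Fintype Ω]

lemma sum_pr {α : Type*} [Fintype α] [DecidableEq α] {p : Ω → ℝ} (hp : IsProb p)
    (X : Ω → α) : ∑ a, pr p X a = 1 := by
  rw [← hp.2]
  unfold pr
  rw [Finset.sum_fiberwise_eq_sum_filter]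
  congr 1
  simp

lemma pr_comp {α β : Type*} [Fintype α] [DecidableEq α] [DecidableEq β]
    (p : Ω → ℝ) (X : Ω → α) (f : α → β) (b : β) :
    pr p (fun ω => f (X ω)) b = ∑ a ∈ univ.filter (fun a => f a = b), pr p X a := by
  unfold pr
  rw [Finset.sum_fiberwise_eq_sum_filter]
  congr 1
  ext ω
  simp

lemma ent_eq_sum_image {γ : Type*} [Fintype γ] [DecidableEq γ]
    (p : Ω → ℝ) (W : Ω → γ) :
    ent p W = -∑ a ∈ univ.image W, pr p W a * Real.logb 2 (pr p W a) := by
  unfold ent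
  congr 1
  refine (Finset.sum_subset (Finset.subset_univ _) ?_).symm
  intro a _ ha
  have hfil : pr p W a = 0 := by
    unfold pr
    rw [Finset.filter_false_of_mem, Finset.sum_empty]
    intro ω _ h
    exact ha (Finset.mem_image.mpr ⟨ω, mem_univ ω, h⟩)
  rw [hfil]
  simp

lemma ent_eq_of_inverse {α β : Type*} [Fintype α] [Fintype β] [DecidableEq α] [DecidableEq β]
    (p : Ω → ℝ) (X : Ω → α) (X' : Ω → β) (f : α → β) (g : β → α)
    (h1 : ∀ ω, f (X ω) = X' ω) (h2 : ∀ ω, g (X' ω) = X ω) :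
    ent p X = ent p X' := by
  have hpr : ∀ ω0, pr p X (X ω0) = pr p X' (X' ω0) := by
    intro ω0
    unfold pr
    congr 1
    ext ω
    simp only [mem_filter, mem_univ, true_and]
    constructor
    · intro h; rw [← h1 ω, ← h1 ω0, h]
    · intro h
      have := congrArg g h
      rwa [h2, h2] at this
  rw [ent_eq_sum_image p X, ent_eq_sum_image p X']
  congr 1
  refine Finset.sum_nbij' f g ?_ ?_ ?_ ?_ ?_
  · rintro a ha
    obtain ⟨ω, -, rfl⟩ := Finset.mem_image.mp ha
    exact Finset.mem_image.mpr ⟨ω, mem_univ ω, (h1 ω).symm⟩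
  · rintro b hb
    obtain ⟨ω, -, rfl⟩ := Finset.mem_image.mp hb
    exact Finset.mem_image.mpr ⟨ω, mem_univ ω, (h2 ω).symm⟩
  · rintro a ha
    obtain ⟨ω, -, rfl⟩ := Finset.mem_image.mp ha
    rw [h1, h2]
  · rintro b hb
    obtain ⟨ω, -, rfl⟩ := Finset.mem_image.mp hb
    rw [h2, h1]
  · rintro a ha
    obtain ⟨ω, -, rfl⟩ := Finset.mem_image.mp ha
    rw [hpr ω, h1]

lemma mutIndep_comp {ι : Type*} [Fintype ι] [DecidableEq ι] {α β : ι → Type*}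
    [∀ i, Fintype (α i)] [∀ i, DecidableEq (α i)] [∀ i, DecidableEq (β i)]
    (p : Ω → ℝ) (X : ∀ i, Ω → α i) (f : ∀ i, α i → β i) (h : MutIndep p X) :
    MutIndep p (fun i ω => f i (X i ω)) := by
  intro a
  have e1 : pr p (fun ω i => f i (X i ω)) a
      = ∑ b ∈ univ.filter (fun b : ∀ i, α i => (fun i => f i (b i)) = a),
          pr p (fun ω i => X i ω) b :=
    pr_comp p (fun ω i => X i ω) (fun b i => f i (b i)) a
  have hset : univ.filter (fun b : ∀ i, α i => (fun i => f i (b i)) = a)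
      = Fintype.piFinset (fun i => univ.filter (fun c => f i c = a i)) := by
    ext b
    simp [funext_iff]
  rw [e1, hset, Finset.sum_congr rfl (fun b _ => h b),
    ← Finset.prod_univ_sum]
  refine Finset.prod_congr rfl fun i _ => ?_
  rw [pr_comp p (X i) (f i) (a i)]

lemma ent_tuple {ι : Type*} [Fintype ι] [DecidableEq ι] {α : ι → Type*}
    [∀ i, Fintype (α i)] [∀ i, DecidableEq (α i)]
    (p : Ω → ℝ) (hp : IsProb p) (X : ∀ i, Ω → α i) (h : MutIndep p X) :
    ent p (fun ω i => X i ω) = ∑ i, ent p (X i) := by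
  have hnn : ∀ i c, 0 ≤ pr p (X i) c := fun i c => Finset.sum_nonneg fun ω _ => hp.1 ω
  have point : ∀ a : ∀ i, α i,
      pr p (fun ω i => X i ω) a * Real.logb 2 (pr p (fun ω i => X i ω) a)
      = ∑ j, ∏ i, (pr p (X i) (a i) *
          if i = j then Real.logb 2 (pr p (X i) (a i)) else 1) := by
    intro a
    rw [h a]
    by_cases hz : ∃ i, pr p (X i) (a i) = 0
    · obtain ⟨i0, hi0⟩ := hz
      rw [Finset.prod_eq_zero (mem_univ i0) hi0, zero_mul]
      refine (Finset.sum_eq_zero fun j _ => ?_).symm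
      exact Finset.prod_eq_zero (mem_univ i0) (by rw [hi0, zero_mul])
    · push_neg at hz
      rw [Real.logb_prod _ _ (fun i _ => hz i), Finset.mul_sum]
      refine Finset.sum_congr rfl fun j _ => ?_
      rw [Finset.prod_mul_distrib, Finset.prod_ite_eq' univ j
        (fun i => Real.logb 2 (pr p (X i) (a i)))]
      simp
  have inner : ∀ j, (∑ a : ∀ i, α i, ∏ i, (pr p (X i) (a i) *
      if i = j then Real.logb 2 (pr p (X i) (a i)) else 1)) = -(ent p (X j)) := by
    intro j
    rw [← Fintype.piFinset_univ, ← Finset.prod_univ_sum (fun _ => (univ : Finset (α _)))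
      (fun i c => pr p (X i) c * if i = j then Real.logb 2 (pr p (X i) c) else 1)]
    rw [Finset.prod_eq_single j]
    · unfold ent
      simp
    · intro i _ hij
      have : ∀ c : α i, pr p (X i) c *
          (if i = j then Real.logb 2 (pr p (X i) c) else 1) = pr p (X i) c := by
        intro c
        rw [if_neg hij, mul_one]
      rw [Finset.sum_congr rfl fun c _ => this c]
      exact sum_pr hp (X i)
    · intro hj
      exact absurd (mem_univ j) hj
  unfold ent
  rw [Finset.sum_congr rfl (fun a _ => point a), Finset.sum_comm,
    Finset.sum_congr rfl (fun j _ => inner j)]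
  simp only [neg_neg, Finset.sum_neg_distrib]
  unfold ent
  rw [Finset.sum_neg_distrib]

lemma ent_const {α : Type*} [Fintype α] [DecidableEq α] (p : Ω → ℝ) (hp : IsProb p) (c : α) :
    ent p (fun _ => c) = 0 := by
  have h1 : pr p (fun _ : Ω => c) c = 1 := by
    unfold pr
    rw [← hp.2]
    congr 1
    ext ω
    simp
  unfold ent
  rw [Finset.sum_eq_single c]
  · rw [h1]; simp
  · intro b _ hb
    have h0 : pr p (fun _ : Ω => c) b = 0 := by
      unfold pr
      rw [Finset.filter_false_of_mem, Finset.sum_empty]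
      intro ω _ h
      exact hb h.symm
    rw [h0]; simp
  · intro h; exact absurd (mem_univ c) h

lemma ent_subsingleton {α : Type*} [Fintype α] [DecidableEq α] [Subsingleton α]
    (p : Ω → ℝ) (hp : IsProb p) (X : Ω → α) : ent p X = 0 := by
  rcases isEmpty_or_nonempty α with h | ⟨⟨a0⟩⟩
  · unfold ent; simp
  · have hX : X = fun _ => a0 := funext fun ω => Subsingleton.elim _ _
    rw [hX, ent_const p hp]

end aux

set_option maxHeartbeats 1000000 in
/-- For any `k`-partition `(B_1, …, B_k)` of the terminals of a
pair-wise independent network, `Σ_l H(X_{B_l}) − H(X_1,…,X_m)` equals the sum of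
`I(Y_{i,j}; Y_{j,i})` over pairs `i < j` lying in different atoms. -/
theorem partition_entropy_sum_pairwise_independent
    {Ω 𝒴 : Type*} [Fintype Ω] [Fintype 𝒴] [DecidableEq 𝒴]
    (m k : ℕ) (p : Ω → ℝ) (hp : IsProb p) (Y : Fin m → Fin m → Ω → 𝒴)
    (hind : MutIndep p (fun (e : {q : Fin m × Fin m // q.1 < q.2}) (ω : Ω) =>
      (Y e.1.1 e.1.2 ω, Y e.1.2 e.1.1 ω)))
    (B : Fin k → Finset (Fin m))
    (hnonempty : ∀ l, (B l).Nonempty)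
    (hdisj : ∀ l r, l ≠ r → Disjoint (B l) (B r))
    (hcover : ∀ i : Fin m, ∃ l, i ∈ B l) :
    (∑ l : Fin k,
        ent p (fun ω (i : {i : Fin m // i ∈ B l}) (j : {j : Fin m // j ≠ i.1}) =>
          Y i.1 j.1 ω))
      - ent p (fun ω (i : Fin m) (j : {j : Fin m // j ≠ i}) => Y i j.1 ω)
      = ∑ q ∈ Finset.univ.filter
            (fun q : Fin m × Fin m => q.1 < q.2 ∧ ¬ ∃ l, q.1 ∈ B l ∧ q.2 ∈ B l),
          mi p (fun ω => Y q.1 q.2 ω) (fun ω => Y q.2 q.1 ω) := by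
  rcases isEmpty_or_nonempty 𝒴 with hY | hY
  · rcases isEmpty_or_nonempty (Fin m) with hm | hm
    · haveI : IsEmpty (Fin k) := ⟨fun l => (hnonempty l).elim fun i _ => isEmptyElim i⟩
      haveI : Subsingleton (∀ i : Fin m, {j : Fin m // j ≠ i} → 𝒴) :=
        ⟨fun a b => funext fun i => isEmptyElim i⟩
      rw [Finset.univ_eq_empty (α := Fin k), Finset.sum_empty,
        ent_subsingleton p hp,
        show (univ : Finset (Fin m × Fin m)) = ∅ from Finset.univ_eq_empty,
        Finset.filter_empty, Finset.sum_empty]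
      ring
    · obtain ⟨i0⟩ := hm
      haveI : IsEmpty Ω := ⟨fun ω => isEmptyElim (Y i0 i0 ω)⟩
      exact absurd hp.2 (by simp)
  haveI : Inhabited 𝒴 := Classical.inhabited_of_nonempty hY
  have huniq : ∀ (i : Fin m) (l l' : Fin k), i ∈ B l → i ∈ B l' → l = l' := by
    intro i l l' h h'
    by_contra hne
    exact Finset.disjoint_left.mp (hdisj l l' hne) h h'
  -- global entropy decomposition
  have hglobal :
      ent p (fun ω (i : Fin m) (j : {j : Fin m // j ≠ i}) => Y i j.1 ω)
        = ∑ e : {q : Fin m × Fin m // q.1 < q.2},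
            ent p (fun ω => (Y e.1.1 e.1.2 ω, Y e.1.2 e.1.1 ω)) := by
    rw [← ent_tuple p hp _ hind]
    refine (ent_eq_of_inverse p _ _
      (fun (z : {q : Fin m × Fin m // q.1 < q.2} → 𝒴 × 𝒴) (i : Fin m)
          (j : {j : Fin m // j ≠ i}) =>
        if h : i < j.1 then (z ⟨(i, j.1), h⟩).1
        else (z ⟨(j.1, i), (not_lt.mp h).lt_of_ne j.2⟩).2)
      (fun (x : ∀ i : Fin m, {j : Fin m // j ≠ i} → 𝒴)
          (e : {q : Fin m × Fin m // q.1 < q.2}) =>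
        (x e.1.1 ⟨e.1.2, e.2.ne'⟩, x e.1.2 ⟨e.1.1, e.2.ne⟩)) ?_ ?_).symm
    · intro ω
      funext i j
      by_cases h : i < j.1
      · simp [h]
      · simp [h]
    · intro ω
      rfl
  -- block entropy decomposition
  have hblock : ∀ l : Fin k,
      ent p (fun ω (i : {i : Fin m // i ∈ B l}) (j : {j : Fin m // j ≠ i.1}) =>
          Y i.1 j.1 ω)
        = ∑ e : {q : Fin m × Fin m // q.1 < q.2},
            ent p (fun ω =>
              ((if e.1.1 ∈ B l then some (Y e.1.1 e.1.2 ω) else none),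
               (if e.1.2 ∈ B l then some (Y e.1.2 e.1.1 ω) else none))) := by
    intro l
    have hmut := mutIndep_comp p _ (fun (e : {q : Fin m × Fin m // q.1 < q.2}) (z : 𝒴 × 𝒴) =>
        ((if e.1.1 ∈ B l then some z.1 else none),
         (if e.1.2 ∈ B l then some z.2 else none))) hind
    rw [← ent_tuple p hp _ hmut]
    refine (ent_eq_of_inverse p _ _
      (fun (v : {q : Fin m × Fin m // q.1 < q.2} → Option 𝒴 × Option 𝒴)
          (i : {i : Fin m // i ∈ B l}) (j : {j : Fin m // j ≠ i.1}) =>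
        if h : i.1 < j.1 then ((v ⟨(i.1, j.1), h⟩).1).getD default
        else ((v ⟨(j.1, i.1), (not_lt.mp h).lt_of_ne j.2⟩).2).getD default)
      (fun (x : ∀ i : {i : Fin m // i ∈ B l}, {j : Fin m // j ≠ i.1} → 𝒴)
          (e : {q : Fin m × Fin m // q.1 < q.2}) =>
        ((if h : e.1.1 ∈ B l then some (x ⟨e.1.1, h⟩ ⟨e.1.2, e.2.ne'⟩) else none),
         (if h : e.1.2 ∈ B l then some (x ⟨e.1.2, h⟩ ⟨e.1.1, e.2.ne⟩) else none))) ?_ ?_).symm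
    · intro ω
      funext i j
      by_cases h : i.1 < j.1
      · simp [h, i.2]
      · simp [h, i.2]
    · intro ω
      funext e
      by_cases h1 : e.1.1 ∈ B l <;> by_cases h2 : e.1.2 ∈ B l <;> simp [h1, h2]
  -- entropy of each masked edge variable
  have hV : ∀ (l : Fin k) (e : {q : Fin m × Fin m // q.1 < q.2}),
      ent p (fun ω =>
          ((if e.1.1 ∈ B l then some (Y e.1.1 e.1.2 ω) else none),
           (if e.1.2 ∈ B l then some (Y e.1.2 e.1.1 ω) else none)))
      = if e.1.1 ∈ B l then
          (if e.1.2 ∈ B l then ent p (fun ω => (Y e.1.1 e.1.2 ω, Y e.1.2 e.1.1 ω))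
           else ent p (fun ω => Y e.1.1 e.1.2 ω))
        else
          (if e.1.2 ∈ B l then ent p (fun ω => Y e.1.2 e.1.1 ω) else 0) := by
    intro l e
    by_cases h1 : e.1.1 ∈ B l <;> by_cases h2 : e.1.2 ∈ B l <;>
      simp only [h1, h2, if_true, if_false, ite_true, ite_false]
    · exact ent_eq_of_inverse p _ _
        (fun v : Option 𝒴 × Option 𝒴 => (v.1.getD default, v.2.getD default))
        (fun z : 𝒴 × 𝒴 => (some z.1, some z.2)) (fun ω => rfl) (fun ω => rfl)
    · exact ent_eq_of_inverse p _ _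
        (fun v : Option 𝒴 × Option 𝒴 => v.1.getD default)
        (fun y : 𝒴 => (some y, none)) (fun ω => rfl) (fun ω => rfl)
    · exact ent_eq_of_inverse p _ _
        (fun v : Option 𝒴 × Option 𝒴 => v.2.getD default)
        (fun y : 𝒴 => (none, some y)) (fun ω => rfl) (fun ω => rfl)
    · exact ent_const p hp (none, none)
  -- per-edge balance
  have hedge : ∀ e : {q : Fin m × Fin m // q.1 < q.2},
      (∑ l : Fin k, ent p (fun ω =>
          ((if e.1.1 ∈ B l then some (Y e.1.1 e.1.2 ω) else none),
           (if e.1.2 ∈ B l then some (Y e.1.2 e.1.1 ω) else none))))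
        - ent p (fun ω => (Y e.1.1 e.1.2 ω, Y e.1.2 e.1.1 ω))
      = if ¬ ∃ l, e.1.1 ∈ B l ∧ e.1.2 ∈ B l
        then mi p (fun ω => Y e.1.1 e.1.2 ω) (fun ω => Y e.1.2 e.1.1 ω) else 0 := by
    intro e
    obtain ⟨l1, hl1⟩ := hcover e.1.1
    obtain ⟨l2, hl2⟩ := hcover e.1.2
    rw [Finset.sum_congr rfl fun l _ => hV l e]
    by_cases hsame : l1 = l2
    · have hl2' : e.1.2 ∈ B l1 := by rwa [hsame]
      rw [if_neg (not_not_intro ⟨l1, hl1, hl2'⟩)]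
      rw [Finset.sum_eq_single l1]
      · rw [if_pos hl1, if_pos hl2', sub_self]
      · intro l _ hne
        rw [if_neg fun h => hne (huniq _ _ _ h hl1),
          if_neg fun h => hne ((huniq _ _ _ h hl2).trans hsame.symm)]
      · intro h
        exact absurd (mem_univ l1) h
    · have hcr : ¬ ∃ l, e.1.1 ∈ B l ∧ e.1.2 ∈ B l := by
        rintro ⟨l, h1, h2⟩
        exact hsame ((huniq _ _ _ h1 hl1).symm.trans (huniq _ _ _ h2 hl2))
      rw [if_pos hcr]
      rw [Finset.sum_eq_add_of_mem l1 l2 (mem_univ l1) (mem_univ l2) hsame ?side]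
      case side =>
        intro l _ hne
        rw [if_neg fun h => hne.1 (huniq _ _ _ h hl1),
          if_neg fun h => hne.2 (huniq _ _ _ h hl2)]
      rw [if_pos hl1, if_neg fun h => hsame (huniq _ _ _ hl1 hl1 ▸ huniq _ _ _ h hl2),
        if_neg fun h => hsame ((huniq _ _ _ h hl1).symm), if_pos hl2]
      unfold mi
      ring
  -- assemble
  rw [Finset.sum_congr rfl fun l (_ : l ∈ univ) => hblock l, hglobal, Finset.sum_comm,
    ← Finset.sum_sub_distrib, Finset.sum_congr rfl fun e (_ : e ∈ univ) => hedge e]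
  rw [show (Finset.univ.filter
        (fun q : Fin m × Fin m => q.1 < q.2 ∧ ¬ ∃ l, q.1 ∈ B l ∧ q.2 ∈ B l))
      = (Finset.univ.filter (fun q : Fin m × Fin m => q.1 < q.2)).filter
          (fun q : Fin m × Fin m => ¬ ∃ l, q.1 ∈ B l ∧ q.2 ∈ B l)
    from by rw [Finset.filter_filter]]
  rw [Finset.sum_filter]
  exact (Finset.sum_subtype (Finset.univ.filter (fun q : Fin m × Fin m => q.1 < q.2))
    (fun q => by simp)
    (fun q : Fin m × Fin m => if ¬ ∃ l, q.1 ∈ B l ∧ q.2 ∈ B l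
      then mi p (fun ω => Y q.1 q.2 ω) (fun ω => Y q.2 q.1 ω) else 0)).symm
end

section
/- For a complete graph on m nodes with every edge having weight w = 2u (u a positive integer), the minimal normalized weight of a multi-cut equals mu; equivalently, min over partitions (B_1,...,B_k) of {1,...,m} with 2 ≤ k ≤ m of (1/(k−1))·(number of edges crossing the partition)·w equals w·C(m,2)/(m−1) = mu. -/
open Finset Function

lemma two_mul_card_lt (m : ℕ) {α : Type*} [DecidableEq α] (f : Fin m → α) :
    2 * (univ.filter (fun q : Fin m × Fin m => q.1 < q.2 ∧ f q.1 ≠ f q.2)).card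
      = (univ.filter (fun q : Fin m × Fin m => f q.1 ≠ f q.2)).card := by
  have h1 : (univ.filter (fun q : Fin m × Fin m => q.1 < q.2 ∧ f q.1 ≠ f q.2)).card
      = (univ.filter (fun q : Fin m × Fin m => q.2 < q.1 ∧ f q.1 ≠ f q.2)).card := by
    apply Finset.card_bij' (fun q _ => q.swap) (fun q _ => q.swap)
    · intro q _; simp
    · intro q _; simp
    · intro q hq; simp only [mem_filter, mem_univ, true_and] at hq ⊢
      exact ⟨hq.1, fun h => hq.2 h.symm⟩
    · intro q hq; simp only [mem_filter, mem_univ, true_and] at hq ⊢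
      exact ⟨hq.1, fun h => hq.2 h.symm⟩
  have h2 : (univ.filter (fun q : Fin m × Fin m => f q.1 ≠ f q.2))
      = (univ.filter (fun q : Fin m × Fin m => q.1 < q.2 ∧ f q.1 ≠ f q.2)) ∪
        (univ.filter (fun q : Fin m × Fin m => q.2 < q.1 ∧ f q.1 ≠ f q.2)) := by
    ext q
    simp only [mem_filter, mem_union, mem_univ, true_and]
    constructor
    · intro h
      rcases lt_trichotomy q.1 q.2 with h' | h' | h'
      · exact Or.inl ⟨h', h⟩
      · exact absurd (congrArg f h') h
      · exact Or.inr ⟨h', h⟩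
    · rintro (⟨_, h⟩ | ⟨_, h⟩) <;> exact h
  have hd : Disjoint (univ.filter (fun q : Fin m × Fin m => q.1 < q.2 ∧ f q.1 ≠ f q.2))
      (univ.filter (fun q : Fin m × Fin m => q.2 < q.1 ∧ f q.1 ≠ f q.2)) := by
    rw [Finset.disjoint_filter]
    rintro q _ ⟨h, _⟩ ⟨h', _⟩
    exact absurd h' (not_lt.mpr h.le)
  rw [h2, Finset.card_union_of_disjoint hd, ← h1]
  ring

lemma crossing_lower (m k : ℕ) (f : Fin m → Fin k) (hf : Surjective f) :
    m * (k - 1) ≤ (univ.filter (fun q : Fin m × Fin m => f q.1 ≠ f q.2)).card := by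
  classical
  -- card = sum over a of card {b | f a ≠ f b}
  have hT : (univ.filter (fun q : Fin m × Fin m => f q.1 ≠ f q.2)).card
      = ∑ a : Fin m, (univ.filter (fun b : Fin m => f a ≠ f b)).card := by
    rw [Finset.card_filter]
    rw [Fintype.sum_prod_type]
    congr 1
    ext a
    rw [Finset.card_filter]
  rw [hT]
  have hfib : ∀ a : Fin m, (univ.filter (fun b : Fin m => f a ≠ f b)).card
      = m - (univ.filter (fun b : Fin m => f b = f a)).card := by
    intro a
    have := Finset.card_filter_add_card_filter_not
      (s := (univ : Finset (Fin m))) (p := fun b => f b = f a)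
    have hcu : (univ : Finset (Fin m)).card = m := by simp
    have hset : (univ.filter (fun b : Fin m => f a ≠ f b))
        = (univ.filter (fun b : Fin m => ¬ (f b = f a))) := by
      ext b; simp [ne_comm, eq_comm]
    rw [hset]
    omega
  simp_rw [hfib]
  -- group by fiber
  have hcomp := Finset.sum_comp (s := (univ : Finset (Fin m)))
    (fun c => m - (univ.filter (fun b : Fin m => f b = c)).card) f
  have himg : (univ : Finset (Fin m)).image f = univ :=
    Finset.image_univ_of_surjective hf
  rw [himg] at hcomp
  have heq : ∀ a : Fin m, m - (univ.filter (fun b : Fin m => f b = f a)).card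
      = (fun c => m - (univ.filter (fun b : Fin m => f b = c)).card) (f a) := fun a => rfl
  calc m * (k - 1)
      ≤ ∑ c : Fin k, (m - (univ.filter (fun b : Fin m => f b = c)).card) := by
        have hsum : ∑ c : Fin k, (univ.filter (fun b : Fin m => f b = c)).card = m := by
          rw [← Finset.card_eq_sum_card_fiberwise (f := f) (t := univ) (fun x _ => mem_univ _)]
          simp
        have hle : ∀ c : Fin k, (univ.filter (fun b : Fin m => f b = c)).card ≤ m := by
          intro c
          calc (univ.filter (fun b : Fin m => f b = c)).card ≤ (univ : Finset (Fin m)).card :=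
            Finset.card_filter_le _ _
          _ = m := by simp
        have := Finset.sum_tsub_distrib (s := (univ : Finset (Fin k)))
          (f := fun _ => m) (g := fun c => (univ.filter (fun b : Fin m => f b = c)).card)
          (fun c _ => hle c)
        rw [this, hsum]
        simp only [Finset.sum_const, Finset.card_univ, Fintype.card_fin, smul_eq_mul]
        exact le_of_eq (by rw [Nat.mul_sub, mul_one, mul_comm])
    _ ≤ ∑ c : Fin k, ((univ.filter (fun b : Fin m => f b = c)).card
          * (m - (univ.filter (fun b : Fin m => f b = c)).card)) := by
        apply Finset.sum_le_sum
        intro c _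
        have hne : 1 ≤ (univ.filter (fun b : Fin m => f b = c)).card := by
          obtain ⟨a, ha⟩ := hf c
          apply Finset.card_pos.mpr
          exact ⟨a, by simp [ha]⟩
        exact Nat.le_mul_of_pos_left _ hne
    _ = ∑ a : Fin m, (m - (univ.filter (fun b : Fin m => f b = f a)).card) := by
        rw [hcomp]
        simp [smul_eq_mul]

/-- for the complete graph on `m` vertices with every edge of
weight `w = 2u`, the minimum over all partitions (given by surjections
`f : Fin m → Fin k`, `2 ≤ k ≤ m`) of the normalized crossing weight
`(1/(k−1)) · w · #{crossing edges}` equals `m·u`. -/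
theorem min_normalized_multicut_complete_graph
    (m u : ℕ) (hm : 2 ≤ m) (hu : 1 ≤ u) :
    IsLeast
      {x : ℝ | ∃ k : ℕ, 2 ≤ k ∧ k ≤ m ∧ ∃ f : Fin m → Fin k,
        Function.Surjective f ∧
        x = (1 / ((k : ℝ) - 1)) * (2 * (u : ℝ)) *
          ((Finset.univ.filter
            (fun q : Fin m × Fin m => q.1 < q.2 ∧ f q.1 ≠ f q.2)).card : ℝ)}
      ((m : ℝ) * u) := by
  constructor
  · -- membership: k = m, f = id
    refine ⟨m, hm, le_rfl, id, surjective_id, ?_⟩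
    set C := (univ.filter (fun q : Fin m × Fin m =>
        q.1 < q.2 ∧ (id q.1 : Fin m) ≠ id q.2)).card with hC
    have h2 := two_mul_card_lt m (id : Fin m → Fin m)
    have hall : (univ.filter (fun q : Fin m × Fin m => (id q.1 : Fin m) ≠ id q.2)).card
        = m * m - m := by
      have : (univ.filter (fun q : Fin m × Fin m => (id q.1 : Fin m) ≠ id q.2))
          = (univ : Finset (Fin m)).offDiag := by
        ext q; simp [Finset.mem_offDiag]
      rw [this, Finset.offDiag_card]
      simp
    rw [hall] at h2
    have hS : (2 : ℝ) * (C : ℝ) = m * m - m := by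
      have := congrArg (Nat.cast : ℕ → ℝ) h2
      push_cast [Nat.cast_sub (by nlinarith : m ≤ m * m)] at this
      linarith [this]
    have hm1 : (0 : ℝ) < (m : ℝ) - 1 := by
      have : (2 : ℝ) ≤ m := by exact_mod_cast hm
      linarith
    rw [div_mul_eq_mul_div, div_mul_eq_mul_div, one_mul, eq_div_iff (ne_of_gt hm1)]
    linear_combination (-(u : ℝ)) * hS
  · rintro x ⟨k, hk2, hkm, f, hf, rfl⟩
    have h2 := two_mul_card_lt m f
    have hlow := crossing_lower m k f hf
    set S := (univ.filter (fun q : Fin m × Fin m => q.1 < q.2 ∧ f q.1 ≠ f q.2)).card with hSdef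
    have hnat : m * (k - 1) ≤ 2 * S := by omega
    have hk1 : (0 : ℝ) < (k : ℝ) - 1 := by
      have : (2 : ℝ) ≤ k := by exact_mod_cast hk2
      linarith
    have hcast : ((m * (k - 1) : ℕ) : ℝ) ≤ ((2 * S : ℕ) : ℝ) := by exact_mod_cast hnat
    rw [Nat.cast_mul, Nat.cast_sub (by omega : 1 ≤ k)] at hcast
    push_cast at hcast
    have hu' : (1 : ℝ) ≤ u := by exact_mod_cast hu
    rw [div_mul_eq_mul_div, div_mul_eq_mul_div, one_mul, le_div_iff₀ hk1]
    nlinarith [hcast, hu', mul_nonneg (le_trans zero_le_one hu')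
      (sub_nonneg.mpr hcast)]
end

section
/- For a partition of the vertex set of K_m into k nonempty parts of sizes n_1,...,n_k (Σ n_l = m), the number of crossing edges is (m² − Σ n_l²)/2, and the normalized count (m² − Σ n_l²)/(2(k−1)) is minimized over all partitions with 2 ≤ k ≤ m at k = m (all singletons), giving value m/2. -/
open Finset

lemma fiber_sum_eq (m k : ℕ) (f : Fin m → Fin k) :
    ∑ l : Fin k, (univ.filter (fun i => f i = l)).card = m := by
  have h := Finset.card_eq_sum_card_fiberwise (s := (univ : Finset (Fin m)))
    (t := (univ : Finset (Fin k))) (f := f) (fun i _ => mem_univ (f i))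
  simpa using h.symm

lemma eq_pairs_card (m k : ℕ) (f : Fin m → Fin k) :
    (univ.filter (fun q : Fin m × Fin m => f q.1 = f q.2)).card
      = ∑ l : Fin k, ((univ.filter (fun i => f i = l)).card) ^ 2 := by
  rw [Finset.card_eq_sum_card_fiberwise (f := fun q => f q.1)
      (fun q _ => mem_univ (f q.1))]
  refine Finset.sum_congr rfl fun l _ => ?_
  rw [Finset.filter_filter]
  have : (univ.filter (fun q : Fin m × Fin m => f q.1 = f q.2 ∧ f q.1 = l))
      = (univ.filter (fun i => f i = l)) ×ˢ (univ.filter (fun i => f i = l)) := by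
    ext q
    simp only [mem_filter, mem_product, mem_univ, true_and]
    constructor
    · rintro ⟨h1, h2⟩
      exact ⟨h2, h1 ▸ h2⟩
    · rintro ⟨h1, h2⟩
      exact ⟨h1.trans h2.symm, h1⟩
  rw [this, Finset.card_product, sq]

lemma swap_card_eq (m k : ℕ) (f : Fin m → Fin k) :
    (univ.filter (fun q : Fin m × Fin m => q.1 < q.2 ∧ f q.1 ≠ f q.2)).card
      = (univ.filter (fun q : Fin m × Fin m => q.2 < q.1 ∧ f q.1 ≠ f q.2)).card := by
  apply Finset.card_bij (fun q _ => q.swap)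
  · rintro ⟨a, b⟩ h; simp only [mem_filter, mem_univ, true_and] at h ⊢
    exact ⟨h.1, h.2.symm⟩
  · rintro ⟨a, b⟩ - ⟨c, d⟩ - h
    simpa [Prod.ext_iff, and_comm] using h
  · rintro ⟨a, b⟩ h; refine ⟨(b, a), ?_, rfl⟩
    simp only [mem_filter, mem_univ, true_and] at h ⊢
    exact ⟨h.1, h.2.symm⟩

lemma three_split (m k : ℕ) (f : Fin m → Fin k) :
    (univ.filter (fun q : Fin m × Fin m => q.1 < q.2 ∧ f q.1 ≠ f q.2)).card
      + (univ.filter (fun q : Fin m × Fin m => q.2 < q.1 ∧ f q.1 ≠ f q.2)).card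
      + (univ.filter (fun q : Fin m × Fin m => f q.1 = f q.2)).card = m ^ 2 := by
  have h1 := Finset.card_filter_add_card_filter_not
    (s := (univ : Finset (Fin m × Fin m))) (p := fun q => f q.1 = f q.2)
  have h2 := Finset.card_filter_add_card_filter_not
    (s := univ.filter (fun q : Fin m × Fin m => f q.1 ≠ f q.2))
    (p := fun q => q.1 < q.2)
  rw [Finset.filter_filter, Finset.filter_filter] at h2
  have e1 : (univ.filter (fun q : Fin m × Fin m => f q.1 ≠ f q.2 ∧ q.1 < q.2))
      = (univ.filter (fun q : Fin m × Fin m => q.1 < q.2 ∧ f q.1 ≠ f q.2)) := by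
    simp [and_comm]
  have e2 : (univ.filter (fun q : Fin m × Fin m => f q.1 ≠ f q.2 ∧ ¬ q.1 < q.2))
      = (univ.filter (fun q : Fin m × Fin m => q.2 < q.1 ∧ f q.1 ≠ f q.2)) := by
    ext q
    simp only [mem_filter, mem_univ, true_and, not_lt]
    constructor
    · rintro ⟨hne, hle⟩
      exact ⟨lt_of_le_of_ne hle (fun h => hne (congrArg f h.symm)), hne⟩
    · rintro ⟨hlt, hne⟩
      exact ⟨hne, le_of_lt hlt⟩
  rw [e1, e2] at h2
  have : (univ : Finset (Fin m × Fin m)).card = m ^ 2 := by simp [sq]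
  simp only [ne_eq] at h2 ⊢
  omega

lemma crossing_lb (m k : ℕ) (hk : 2 ≤ k)
    (n : Fin k → ℕ) (hn1 : ∀ l, 1 ≤ n l) (hsum : ∑ l, n l = m) :
    (m : ℝ) / 2 ≤ ((m:ℝ)^2 - ∑ l, (n l : ℝ)^2) / (2 * ((k:ℝ) - 1)) := by
  have hb : (0:ℝ) < 2 * ((k:ℝ) - 1) := by
    have : (2:ℝ) ≤ k := by exact_mod_cast hk
    nlinarith
  rw [le_div_iff₀ hb]
  have hle : ∀ l, n l ≤ m := fun l =>
    hsum ▸ Finset.single_le_sum (fun _ _ => Nat.zero_le _) (mem_univ l)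
  have hsumR : ∑ l, (n l : ℝ) = m := by exact_mod_cast hsum
  have perl : ∀ l ∈ (univ : Finset (Fin k)),
      (n l:ℝ)^2 + ((m:ℝ) - n l) ≤ (n l:ℝ) * m := by
    intro l _
    have h1 : (1:ℝ) ≤ n l := by exact_mod_cast hn1 l
    have h2 : (n l:ℝ) ≤ m := by exact_mod_cast hle l
    nlinarith
  have hsum2 := Finset.sum_le_sum perl
  rw [Finset.sum_add_distrib, Finset.sum_sub_distrib, Finset.sum_const, ← Finset.sum_mul,
    hsumR] at hsum2
  simp only [card_univ, Fintype.card_fin, nsmul_eq_mul] at hsum2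
  nlinarith [hsum2]

/-- for a partition of the vertices of `K_m` into `k` nonempty
parts of sizes `n_1, …, n_k` (given by a surjection `f : Fin m → Fin k`), the
number of crossing edges `N_f` satisfies `2·N_f + Σ n_l² = m²`; moreover the
normalized count `(m² − Σ n_l²)/(2(k−1))` is minimized over all partitions with
`2 ≤ k ≤ m` at the all-singletons partition, giving value `m/2`. -/
theorem crossing_edges_count_and_min_normalized
    (m : ℕ) (hm : 2 ≤ m) :
    (∀ (k : ℕ) (f : Fin m → Fin k), Function.Surjective f →
      2 * (Finset.univ.filter
          (fun q : Fin m × Fin m => q.1 < q.2 ∧ f q.1 ≠ f q.2)).card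
        + ∑ l : Fin k, ((Finset.univ.filter (fun i => f i = l)).card) ^ 2
        = m ^ 2)
    ∧ IsLeast
        {x : ℝ | ∃ k : ℕ, 2 ≤ k ∧ k ≤ m ∧ ∃ f : Fin m → Fin k,
          Function.Surjective f ∧
          x = ((m : ℝ) ^ 2 -
              ∑ l : Fin k, (((Finset.univ.filter (fun i => f i = l)).card : ℝ)) ^ 2) /
            (2 * ((k : ℝ) - 1))}
        ((m : ℝ) / 2) := by
  constructor
  · intro k f _
    have h := three_split m k f
    have hs := swap_card_eq m k f
    have he := eq_pairs_card m k f
    omega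
  constructor
  · -- membership : all-singletons partition
    refine ⟨m, hm, le_rfl, id, Function.surjective_id, ?_⟩
    simp only [id_eq]
    have h1 : ∀ l : Fin m, (univ.filter (fun i : Fin m => i = l)).card = 1 := by
      intro l; simp [Finset.filter_eq']
    have hs : ∑ l : Fin m, (((univ.filter (fun i : Fin m => i = l)).card : ℝ)) ^ 2
        = m := by simp [h1]
    rw [hs]
    have hne : (m : ℝ) - 1 ≠ 0 := by
      have : (2:ℝ) ≤ m := by exact_mod_cast hm
      intro h; nlinarith
    field_simp
  · -- lower bound
    rintro x ⟨k, hk, hkm, f, hf, rfl⟩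
    have hn1 : ∀ l : Fin k, 1 ≤ (univ.filter (fun i => f i = l)).card := by
      intro l
      obtain ⟨i, hi⟩ := hf l
      exact Finset.card_pos.2 ⟨i, by simp [hi]⟩
    have hsum := fiber_sum_eq m k f
    have := crossing_lb m k hk (fun l => (univ.filter (fun i => f i = l)).card)
      hn1 hsum
    exact this
end
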